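/- arXiv:2405.01615 — 3 statements merged into one kernel-verified Lean document; each statement's English description precedes it below -/
import Mathlib

section
/- Let k ≤ d, let θ ∈ ℝ^d be k-sparse, let g ∈ ℝ^d, and let α > 0. Let θ⁺ be any minimizer of u ↦ ‖u − (θ − αg)‖ over all k-sparse u ∈ ℝ^d (e.g., θ⁺ = trunc(θ − αg, k)). Then ⟨g, θ⁺ − θ⟩ + (1/(2α)) ‖θ⁺ − θ‖² ≤ 0. -/
/-!
Since `θ` is itself `k`-sparse, the projection `θ⁺` of `θ - α • g` is at least as close to
`θ - α • g` as `θ` is: `‖(θ⁺ - θ) + α • g‖ ≤ ‖α • g‖`. Expanding the square gives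
`‖θ⁺ - θ‖² + 2α ⟪g, θ⁺ - θ⟫ ≤ 0`, and dividing by `2α` is the claim.
-/

open scoped RealInnerProductSpace

/-- The `L₀` pseudo-norm: number of nonzero coordinates. -/
noncomputable def l0norm {d : ℕ} (z : EuclideanSpace ℝ (Fin d)) : ℕ :=
  (Finset.univ.filter fun i => z i ≠ 0).card

section InnerProductSpace

variable {E : Type*} [NormedAddCommGroup E] [InnerProductSpace ℝ E]

theorem norm_add_le_norm_iff_real {v w : E} :
    ‖v + w‖ ≤ ‖w‖ ↔ ‖v‖ ^ 2 + 2 * ⟪v, w⟫ ≤ 0 := by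
  rw [← sq_le_sq₀ (norm_nonneg _) (norm_nonneg _), norm_add_sq_real]
  constructor <;> intro h <;> linarith

theorem inner_add_norm_sq_div_nonpos_of_norm_sub_le {x g p : E} {α : ℝ} (hα : 0 < α)
    (h : ‖p - (x - α • g)‖ ≤ ‖x - (x - α • g)‖) :
    ⟪g, p - x⟫ + (1 / (2 * α)) * ‖p - x‖ ^ 2 ≤ 0 := by
  have hexpand : ‖p - x‖ ^ 2 + 2 * α * ⟪g, p - x⟫ ≤ 0 := by
    rw [show p - (x - α • g) = (p - x) + α • g by abel, sub_sub_cancel,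
      norm_add_le_norm_iff_real, real_inner_smul_right, real_inner_comm] at h
    linarith
  have hscaled : ⟪g, p - x⟫ + (1 / (2 * α)) * ‖p - x‖ ^ 2
      = (1 / (2 * α)) * (‖p - x‖ ^ 2 + 2 * α * ⟪g, p - x⟫) := by
    field_simp
    ring
  rw [hscaled]
  exact mul_nonpos_of_nonneg_of_nonpos (by positivity) hexpand

end InnerProductSpace

theorem hard_thresholding_descent_inequality_general
    (d k : ℕ) (θ g θplus : EuclideanSpace ℝ (Fin d)) (α : ℝ) (hα : 0 < α)
    (hθ : l0norm θ ≤ k)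
    (hmin : ∀ u : EuclideanSpace ℝ (Fin d), l0norm u ≤ k →
      ‖θplus - (θ - α • g)‖ ≤ ‖u - (θ - α • g)‖) :
    ⟪g, θplus - θ⟫ + (1 / (2 * α)) * ‖θplus - θ‖ ^ 2 ≤ 0 :=
  inner_add_norm_sq_div_nonpos_of_norm_sub_le hα (hmin θ hθ)

/-- Basic descent inequality for the hard-thresholding update: if `θ` is `k`-sparse and
`θ⁺` is a Euclidean projection of `θ − αg` onto the `k`-sparse vectors, then
`⟨g, θ⁺ − θ⟩ + (1/(2α))‖θ⁺ − θ‖² ≤ 0`. -/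
theorem hard_thresholding_descent_inequality
    (d k : ℕ) (hk : k ≤ d) (θ g θplus : EuclideanSpace ℝ (Fin d)) (α : ℝ) (hα : 0 < α)
    (hθ : l0norm θ ≤ k) (hθplus : l0norm θplus ≤ k)
    (hmin : ∀ u : EuclideanSpace ℝ (Fin d), l0norm u ≤ k →
      ‖θplus - (θ - α • g)‖ ≤ ‖u - (θ - α • g)‖) :
    ⟪g, θplus - θ⟫ + (1 / (2 * α)) * ‖θplus - θ‖ ^ 2 ≤ 0 :=
  hard_thresholding_descent_inequality_general d k θ g θplus α hα hθ hmin
end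

section
/- Let G : ℝ^d → ℝ be differentiable with L-Lipschitz gradient (L > 0). Let k ≤ d, let θ ∈ ℝ^d be k-sparse, let g ∈ ℝ^d, let α > 0, and let θ⁺ be any minimizer of u ↦ ‖u − (θ − αg)‖ over all k-sparse u ∈ ℝ^d. Then ⟨g − ∇G(θ), θ⁺ − θ⟩ + (1/2)(1/α − L) ‖θ⁺ − θ‖² ≤ G(θ) − G(θ⁺). -/
open scoped RealInnerProductSpace

/-!
The update `θ⁺` is at least as close to `θ - α g` as the `k`-sparse point `θ` is; expanding the
squares gives `α ⟪g, θ⁺ - θ⟫ + ‖θ⁺ - θ‖² / 2 ≤ 0`. Adding the descent lemma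
`G θ⁺ ≤ G θ + ⟪∇G θ, θ⁺ - θ⟫ + L/2 ‖θ⁺ - θ‖²` for the `L`-smooth `G` gives the claim.
-/

open Set in
theorem le_add_deriv_add_half_of_deriv_sub_le {φ φ' : ℝ → ℝ} {c : ℝ}
    (hφ : ∀ t ∈ Icc (0 : ℝ) 1, HasDerivAt φ (φ' t) t)
    (hφ' : ∀ t ∈ Ioo (0 : ℝ) 1, φ' t - φ' 0 ≤ c * t) :
    φ 1 ≤ φ 0 + φ' 0 + c / 2 := by
  set ψ : ℝ → ℝ := fun t => φ t - t * φ' 0 - c / 2 * t ^ 2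
  have hψ : ∀ t ∈ Icc (0 : ℝ) 1, HasDerivAt ψ (φ' t - φ' 0 - c * t) t := fun t ht => by
    refine (((hφ t ht).sub ((hasDerivAt_id' t).mul_const (φ' 0))).sub
      ((hasDerivAt_pow 2 t).const_mul (c / 2))).congr_deriv ?_
    norm_num
    ring
  have hanti : AntitoneOn ψ (Icc 0 1) := by
    refine antitoneOn_of_deriv_nonpos (convex_Icc 0 1)
      (fun t ht => (hψ t ht).continuousAt.continuousWithinAt) (fun t ht => ?_) (fun t ht => ?_)
    · rw [interior_Icc] at ht
      exact (hψ t (Ioo_subset_Icc_self ht)).differentiableAt.differentiableWithinAt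
    · rw [interior_Icc] at ht
      rw [(hψ t (Ioo_subset_Icc_self ht)).deriv]
      linarith [hφ' t ht]
  have := hanti (left_mem_Icc.2 zero_le_one) (right_mem_Icc.2 zero_le_one) zero_le_one
  simp only [ψ] at this
  linarith

/-- The descent lemma for a function with `L`-Lipschitz gradient. -/
theorem le_add_inner_gradient_add_of_gradient_lipschitz {E : Type*} [NormedAddCommGroup E]
    [InnerProductSpace ℝ E] [CompleteSpace E] {G : E → ℝ} {L : ℝ}
    (hG : Differentiable ℝ G) (hG' : ∀ x y, ‖gradient G x - gradient G y‖ ≤ L * ‖x - y‖)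
    (x y : E) : G y ≤ G x + ⟪gradient G x, y - x⟫ + L / 2 * ‖y - x‖ ^ 2 := by
  set v := y - x
  have hderiv : ∀ t : ℝ, HasDerivAt (fun t : ℝ => G (x + t • v)) ⟪gradient G (x + t • v), v⟫ t :=
    fun t => by
      have hline : HasDerivAt (fun t : ℝ => x + t • v) v t := by
        simpa using ((hasDerivAt_id t).smul_const v).const_add x
      exact ((hG _).hasGradientAt.hasFDerivAt.comp_hasDerivAt t hline).congr_deriv (by simp)
  have hgrowth : ∀ t ∈ Set.Ioo (0 : ℝ) 1,
      ⟪gradient G (x + t • v), v⟫ - ⟪gradient G (x + (0 : ℝ) • v), v⟫ ≤ L * ‖v‖ ^ 2 * t := by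
    intro t ht
    rw [zero_smul, add_zero, ← inner_sub_left]
    calc ⟪gradient G (x + t • v) - gradient G x, v⟫
        ≤ ‖gradient G (x + t • v) - gradient G x‖ * ‖v‖ := real_inner_le_norm _ _
      _ ≤ L * ‖(x + t • v) - x‖ * ‖v‖ := by gcongr; exact hG' _ _
      _ = L * ‖v‖ ^ 2 * t := by
        rw [add_sub_cancel_left, norm_smul, Real.norm_of_nonneg ht.1.le]
        ring
  have := le_add_deriv_add_half_of_deriv_sub_le (fun t _ => hderiv t) hgrowth
  simp only [one_smul, zero_smul, add_zero, v, add_sub_cancel] at this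
  linarith

theorem two_mul_inner_le_neg_norm_sq_of_norm_sub_le {E : Type*} [NormedAddCommGroup E]
    [InnerProductSpace ℝ E] {θ p g : E} {α : ℝ}
    (h : ‖p - (θ - α • g)‖ ≤ ‖θ - (θ - α • g)‖) :
    2 * α * ⟪g, p - θ⟫ ≤ -‖p - θ‖ ^ 2 := by
  rw [show p - (θ - α • g) = (p - θ) + α • g by abel, sub_sub_cancel] at h
  have hsq := pow_le_pow_left₀ (norm_nonneg _) h 2
  rw [norm_add_sq_real, real_inner_smul_right, real_inner_comm] at hsq
  linarith

theorem hard_thresholding_smooth_progress_general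
    (d k : ℕ) (G : EuclideanSpace ℝ (Fin d) → ℝ) (L : ℝ)
    (hGdiff : Differentiable ℝ G)
    (hGlip : ∀ x y : EuclideanSpace ℝ (Fin d),
      ‖gradient G x - gradient G y‖ ≤ L * ‖x - y‖)
    (θ g θplus : EuclideanSpace ℝ (Fin d)) (α : ℝ) (hα : 0 < α)
    (hθ : l0norm θ ≤ k)
    (hmin : ∀ u : EuclideanSpace ℝ (Fin d), l0norm u ≤ k →
      ‖θplus - (θ - α • g)‖ ≤ ‖u - (θ - α • g)‖) :
    ⟪g - gradient G θ, θplus - θ⟫ + (1 / 2) * (1 / α - L) * ‖θplus - θ‖ ^ 2 ≤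
      G θ - G θplus := by
  have hstep := two_mul_inner_le_neg_norm_sq_of_norm_sub_le (hmin θ hθ)
  have hdescent := le_add_inner_gradient_add_of_gradient_lipschitz hGdiff hGlip θ θplus
  have hprox : ⟪g, θplus - θ⟫ + 1 / (2 * α) * ‖θplus - θ‖ ^ 2 ≤ 0 := by
    rw [← mul_le_mul_iff_of_pos_left (by positivity : (0 : ℝ) < 2 * α), mul_zero, mul_add,
      ← mul_assoc, mul_one_div_cancel (by positivity), one_mul]
    linarith
  rw [inner_sub_left, show (1 / 2) * (1 / α - L) = 1 / (2 * α) - L / 2 by field_simp]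
  linarith

/-- One-step progress inequality for hard-thresholding with an `L`-smooth function `G`:
`⟨g − ∇G(θ), θ⁺ − θ⟩ + (1/2)(1/α − L)‖θ⁺ − θ‖² ≤ G(θ) − G(θ⁺)`. -/
theorem hard_thresholding_smooth_progress
    (d k : ℕ) (hk : k ≤ d) (G : EuclideanSpace ℝ (Fin d) → ℝ) (L : ℝ) (hL : 0 < L)
    (hGdiff : Differentiable ℝ G)
    (hGlip : ∀ x y : EuclideanSpace ℝ (Fin d),
      ‖gradient G x - gradient G y‖ ≤ L * ‖x - y‖)
    (θ g θplus : EuclideanSpace ℝ (Fin d)) (α : ℝ) (hα : 0 < α)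
    (hθ : l0norm θ ≤ k) (hθplus : l0norm θplus ≤ k)
    (hmin : ∀ u : EuclideanSpace ℝ (Fin d), l0norm u ≤ k →
      ‖θplus - (θ - α • g)‖ ≤ ‖u - (θ - α • g)‖) :
    ⟪g - gradient G θ, θplus - θ⟫ + (1 / 2) * (1 / α - L) * ‖θplus - θ‖ ^ 2 ≤
      G θ - G θplus :=
  hard_thresholding_smooth_progress_general d k G L hGdiff hGlip θ g θplus α hα hθ hmin
end

section
/- Let G : ℝ^d → ℝ be differentiable with L-Lipschitz gradient (L > 0) and bounded: |G(x)| ≤ B for all x ∈ ℝ^d (B > 0). Let k ≤ d, α > 0, and let T ≥ 1. Let θ₀ ∈ ℝ^d be k-sparse, let g₀, …, g_{T−1} ∈ ℝ^d, and for each t let θ_{t+1} be a minimizer of u ↦ ‖u − (θ_t − α g_t)‖ over all k-sparse u ∈ ℝ^d. Then (1/(2α) − L) · Σ_{t=0}^{T−1} ‖θ_{t+1} − θ_t‖² ≤ 2B + (1/(2L)) · Σ_{t=0}^{T−1} ‖g_t − ∇G(θ_t)‖². -/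
/-!
Since `θ (t + 1)` is at least as close to `θ t - α • g t` as the sparse point `θ t`,
expanding the squares gives `⟪g t, δ⟫ ≤ -‖δ‖² / (2α)` for `δ = θ (t + 1) - θ t`. Combined with
the descent lemma `G (θ + δ) ≤ G θ + ⟪∇G θ, δ⟫ + L/2 ‖δ‖²` and Young's inequality for the
gradient error `⟪∇G θ - g, δ⟫`, each step decreases `G` up to the error term; the decreases
telescope to `G (θ 0) - G (θ T) ≤ 2B`.
-/

open scoped RealInnerProductSpace

section
variable {F : Type*} [NormedAddCommGroup F] [InnerProductSpace ℝ F]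

theorem apply_le_add_inner_gradient_add_sq [CompleteSpace F] {G : F → ℝ} {L : ℝ}
    (hG : Differentiable ℝ G)
    (hlip : ∀ x y, ‖gradient G x - gradient G y‖ ≤ L * ‖x - y‖) (x y : F) :
    G y ≤ G x + ⟪gradient G x, y - x⟫ + L / 2 * ‖y - x‖ ^ 2 := by
  set δ := y - x
  -- `φ` is the gap to the quadratic upper model along the segment; its derivative is `≤ 0`.
  set φ : ℝ → ℝ := fun s => G (x + s • δ) - s * ⟪gradient G x, δ⟫ - L / 2 * s ^ 2 * ‖δ‖ ^ 2
  have hφ : ∀ s, HasDerivAt φ (⟪gradient G (x + s • δ) - gradient G x, δ⟫ - L * s * ‖δ‖ ^ 2) s := by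
    intro s
    have hline : HasDerivAt (fun s : ℝ => x + s • δ) δ s := by
      simpa using ((hasDerivAt_id s).smul_const δ).const_add x
    have hG' := (hG (x + s • δ)).hasFDerivAt.comp_hasDerivAt s hline
    rw [← inner_gradient_left] at hG'
    refine ((hG'.sub ((hasDerivAt_id s).mul_const ⟪gradient G x, δ⟫)).sub
      (((hasDerivAt_pow 2 s).const_mul (L / 2)).mul_const (‖δ‖ ^ 2))).congr_deriv ?_
    simp only [inner_sub_left, Nat.cast_ofNat]
    ring
  have hanti : AntitoneOn φ (Set.Ici 0) := by
    refine antitoneOn_of_hasDerivWithinAt_nonpos (convex_Ici 0)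
      (fun s _ => (hφ s).continuousAt.continuousWithinAt) (fun s _ => (hφ s).hasDerivWithinAt) ?_
    intro s hs
    rw [interior_Ici] at hs
    replace hs : 0 ≤ s := hs.le
    calc ⟪gradient G (x + s • δ) - gradient G x, δ⟫ - L * s * ‖δ‖ ^ 2
        ≤ L * ‖s • δ‖ * ‖δ‖ - L * s * ‖δ‖ ^ 2 := by
          gcongr
          simpa using (real_inner_le_norm _ _).trans
            (mul_le_mul_of_nonneg_right (hlip (x + s • δ) x) (norm_nonneg δ))
      _ = 0 := by rw [norm_smul, Real.norm_of_nonneg hs]; ring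
  have hφ01 := hanti Set.self_mem_Ici (Set.mem_Ici.2 zero_le_one) zero_le_one
  simp only [φ, one_smul, zero_smul, add_zero, δ, add_sub_cancel] at hφ01
  linarith

theorem two_mul_real_inner_add_norm_sq_nonpos {θ θ' g : F} {α : ℝ}
    (h : ‖θ' - (θ - α • g)‖ ≤ ‖θ - (θ - α • g)‖) :
    2 * α * ⟪g, θ' - θ⟫ + ‖θ' - θ‖ ^ 2 ≤ 0 := by
  rw [sub_sub_cancel, show θ' - (θ - α • g) = (θ' - θ) + α • g by abel] at h
  have hsq := pow_le_pow_left₀ (norm_nonneg _) h 2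
  rw [norm_add_sq_real, real_inner_smul_right, real_inner_comm] at hsq
  linarith

theorem real_inner_le_norm_sq_div_add {L : ℝ} (hL : 0 < L) (u v : F) :
    ⟪u, v⟫ ≤ 1 / (2 * L) * ‖u‖ ^ 2 + L / 2 * ‖v‖ ^ 2 := by
  have hsq : 0 ≤ ‖u - L • v‖ ^ 2 := sq_nonneg _
  rw [norm_sub_sq_real, real_inner_smul_right, norm_smul, Real.norm_of_nonneg hL.le] at hsq
  field_simp
  nlinarith

theorem descent_step_of_norm_sub_le [CompleteSpace F] {G : F → ℝ} {L α : ℝ}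
    (hL : 0 < L) (hα : 0 < α)
    (hG : Differentiable ℝ G) (hlip : ∀ x y, ‖gradient G x - gradient G y‖ ≤ L * ‖x - y‖)
    {θ θ' g : F} (h : ‖θ' - (θ - α • g)‖ ≤ ‖θ - (θ - α • g)‖) :
    (1 / (2 * α) - L) * ‖θ' - θ‖ ^ 2 ≤
      G θ - G θ' + 1 / (2 * L) * ‖g - gradient G θ‖ ^ 2 := by
  have hdesc := apply_le_add_inner_gradient_add_sq hG hlip θ θ'
  have hproj : 1 / (2 * α) * ‖θ' - θ‖ ^ 2 ≤ -⟪g, θ' - θ⟫ := by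
    rw [div_mul_eq_mul_div, one_mul, div_le_iff₀ (by positivity)]
    linarith [two_mul_real_inner_add_norm_sq_nonpos h]
  have hyoung := real_inner_le_norm_sq_div_add hL (gradient G θ - g) (θ' - θ)
  rw [norm_sub_rev, inner_sub_left] at hyoung
  linarith
end

theorem hard_thresholding_telescoped_descent_general
    (d k : ℕ) (G : EuclideanSpace ℝ (Fin d) → ℝ) (L B : ℝ)
    (hL : 0 < L)
    (hGdiff : Differentiable ℝ G)
    (hGlip : ∀ x y : EuclideanSpace ℝ (Fin d),
      ‖gradient G x - gradient G y‖ ≤ L * ‖x - y‖)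
    (hGbound : ∀ x, |G x| ≤ B)
    (α : ℝ) (hα : 0 < α) (T : ℕ)
    (θ g : ℕ → EuclideanSpace ℝ (Fin d))
    (hθ0 : l0norm (θ 0) ≤ k)
    (hsparse : ∀ t < T, l0norm (θ (t + 1)) ≤ k)
    (hmin : ∀ t < T, ∀ u : EuclideanSpace ℝ (Fin d), l0norm u ≤ k →
      ‖θ (t + 1) - (θ t - α • g t)‖ ≤ ‖u - (θ t - α • g t)‖) :
    (1 / (2 * α) - L) * ∑ t ∈ Finset.range T, ‖θ (t + 1) - θ t‖ ^ 2 ≤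
      2 * B + (1 / (2 * L)) * ∑ t ∈ Finset.range T, ‖g t - gradient G (θ t)‖ ^ 2 := by
  have hθsparse : ∀ t < T, l0norm (θ t) ≤ k := by
    rintro (_ | t) ht
    exacts [hθ0, hsparse t (by omega)]
  -- `θ t` is itself a sparse competitor in the minimisation defining `θ (t + 1)`.
  have hstep : ∀ t ∈ Finset.range T, (1 / (2 * α) - L) * ‖θ (t + 1) - θ t‖ ^ 2 ≤
      G (θ t) - G (θ (t + 1)) + 1 / (2 * L) * ‖g t - gradient G (θ t)‖ ^ 2 := fun t ht =>
    descent_step_of_norm_sub_le hL hα hGdiff hGlip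
      (hmin t (Finset.mem_range.1 ht) _ (hθsparse t (Finset.mem_range.1 ht)))
  have hG : G (θ 0) - G (θ T) ≤ 2 * B := by
    linarith [abs_le.mp (hGbound (θ 0)), abs_le.mp (hGbound (θ T))]
  calc (1 / (2 * α) - L) * ∑ t ∈ Finset.range T, ‖θ (t + 1) - θ t‖ ^ 2
      = ∑ t ∈ Finset.range T, (1 / (2 * α) - L) * ‖θ (t + 1) - θ t‖ ^ 2 := Finset.mul_sum _ _ _
    _ ≤ ∑ t ∈ Finset.range T,
          (G (θ t) - G (θ (t + 1)) + 1 / (2 * L) * ‖g t - gradient G (θ t)‖ ^ 2) :=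
        Finset.sum_le_sum hstep
    _ = G (θ 0) - G (θ T) +
          1 / (2 * L) * ∑ t ∈ Finset.range T, ‖g t - gradient G (θ t)‖ ^ 2 := by
        rw [Finset.sum_add_distrib, Finset.sum_range_sub' (fun t => G (θ t)), Finset.mul_sum]
    _ ≤ _ := by linarith

/-- Telescoped descent bound along the hard-thresholding iterates:
`(1/(2α) − L) Σ ‖θ_{t+1} − θ_t‖² ≤ 2B + (1/(2L)) Σ ‖g_t − ∇G(θ_t)‖²`. -/
theorem hard_thresholding_telescoped_descent
    (d k : ℕ) (hk : k ≤ d) (G : EuclideanSpace ℝ (Fin d) → ℝ) (L B : ℝ)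
    (hL : 0 < L) (hB : 0 < B)
    (hGdiff : Differentiable ℝ G)
    (hGlip : ∀ x y : EuclideanSpace ℝ (Fin d),
      ‖gradient G x - gradient G y‖ ≤ L * ‖x - y‖)
    (hGbound : ∀ x, |G x| ≤ B)
    (α : ℝ) (hα : 0 < α) (T : ℕ) (hT : 1 ≤ T)
    (θ g : ℕ → EuclideanSpace ℝ (Fin d))
    (hθ0 : l0norm (θ 0) ≤ k)
    (hsparse : ∀ t < T, l0norm (θ (t + 1)) ≤ k)
    (hmin : ∀ t < T, ∀ u : EuclideanSpace ℝ (Fin d), l0norm u ≤ k →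
      ‖θ (t + 1) - (θ t - α • g t)‖ ≤ ‖u - (θ t - α • g t)‖) :
    (1 / (2 * α) - L) * ∑ t ∈ Finset.range T, ‖θ (t + 1) - θ t‖ ^ 2 ≤
      2 * B + (1 / (2 * L)) * ∑ t ∈ Finset.range T, ‖g t - gradient G (θ t)‖ ^ 2 :=
  hard_thresholding_telescoped_descent_general d k G L B hL hGdiff hGlip hGbound α hα T θ g hθ0
    hsparse hmin
end
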